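/- Let Ω ⊆ ℝ^d be open convex and f : Ω → ℝ of class C^k with D^k f Lipschitz with constant L. Then for every (k+1)-tuple of vectors u = (u₁,…,u_{k+1}) and every x such that the relevant parallelepiped lies in Ω, ‖Δ^{k+1}_u f(x)‖ ≤ L · ‖u₁‖⋯‖u_{k+1}‖. -/

import Mathlib

/-!
Induct on `k`. Peeling off the first vector,
`Δ^{k+1}_u f x = Δ^k_{u'} f (x + u₀) - Δ^k_{u'} f x` with `u' = (u₁, …, u_k)`, and
`y ↦ Δ^k_{u'} f y` has derivative `Δ^k_{u'} (Df) y`. Since `D^{k-1}(Df)` is `D^k f` up to the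
isometric currying map, the induction hypothesis applied to `Df` bounds this derivative by
`L ‖u₁‖⋯‖u_k‖` along the segment `[x, x + u₀]`, and the mean value inequality closes the step.
For `k = 0` the claim is the Lipschitz bound on `f` itself.
-/

open Finset

/-- The finite difference of order `m`:
`Δ^m_u f (x) = ∑_{α ∈ {0,1}^m} (-1)^{m-|α|} f (x + α·u)`. -/
def fdiff {X Y : Type*} [AddCommGroup X] [AddCommGroup Y] {m : ℕ}
    (u : Fin m → X) (f : X → Y) (x : X) : Y :=
  ∑ α : Fin m → Bool,
    ((-1 : ℤ) ^ (m - (Finset.univ.filter fun i => α i).card)) •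
      f (x + ∑ i, if α i then u i else 0)

open scoped Pointwise NNReal

section FiniteDifference

variable {X Y : Type*} [AddCommGroup X] [AddCommGroup Y]

@[simp]
lemma fdiff_zero (u : Fin 0 → X) (f : X → Y) (x : X) : fdiff u f x = f x := by
  simp [fdiff]

lemma card_filter_cons {m : ℕ} (b : Bool) (β : Fin m → Bool) :
    #{i | (Fin.cons b β : Fin (m + 1) → Bool) i} = #{i | β i} + b.toNat := by
  rw [card_filter, card_filter, Fin.sum_univ_succ]
  cases b <;> simp [add_comm]

lemma fdiff_cons {m : ℕ} (u : Fin (m + 1) → X) (f : X → Y) (x : X) :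
    fdiff u f x = fdiff (Fin.tail u) f (x + u 0) - fdiff (Fin.tail u) f x := by
  unfold fdiff
  rw [← (Fin.consEquiv fun _ => Bool).sum_comp, Fintype.sum_prod_type, Fintype.sum_bool,
    sub_eq_add_neg, ← sum_neg_distrib]
  simp only [Fin.consEquiv_apply, card_filter_cons, Fin.sum_univ_succ, Fin.cons_zero,
    Fin.cons_succ, Fin.tail, Bool.toNat_true, Bool.toNat_false, if_true, if_false,
    Bool.false_eq_true, add_zero, zero_add]
  congr 1 <;> refine sum_congr rfl fun β _ => ?_
  · rw [Nat.add_sub_add_right, add_assoc]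
  · have hβ : #{i | β i} ≤ m := card_le_univ _ |>.trans (by simp)
    rw [Nat.sub_add_comm hβ, pow_succ, mul_neg_one, neg_smul]

end FiniteDifference

section Parallelepiped

variable {E : Type*} [AddCommGroup E] [Module ℝ E]

lemma sum_ite_mem_parallelepiped {ι : Type*} [Fintype ι] (u : ι → E) (α : ι → Bool) :
    ∑ i, (if α i then u i else 0) ∈ parallelepiped u := by
  refine (mem_parallelepiped_iff _ _).2 ⟨fun i => if α i then 1 else 0, ?_, ?_⟩
  · constructor <;> intro i <;> dsimp only <;> split_ifs <;> simp
  · simp only [ite_smul, one_smul, zero_smul]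

lemma vadd_parallelepiped_tail_subset {m : ℕ} {u : Fin (m + 1) → E} {x y : E}
    (hy : y ∈ segment ℝ x (x + u 0)) :
    y +ᵥ parallelepiped (Fin.tail u) ⊆ x +ᵥ parallelepiped u := by
  have hz : y - x ∈ segment ℝ 0 (u 0) := by
    rwa [← mem_segment_translate ℝ x, add_zero, add_sub_cancel]
  rw [parallelepiped_eq_sum_segment (Fin.tail u), parallelepiped_eq_sum_segment,
    Fin.sum_univ_succ, ← add_sub_cancel x y, add_vadd]
  exact Set.vadd_set_mono (Set.vadd_set_subset_add hz)

end Parallelepiped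

section Calculus

variable {𝕜 E F : Type*} [NontriviallyNormedField 𝕜] [NormedAddCommGroup E] [NormedSpace 𝕜 E]
  [NormedAddCommGroup F] [NormedSpace 𝕜 F]

lemma hasFDerivAt_fdiff {m : ℕ} {u : Fin m → E} {f : E → F} {f' : E → E →L[𝕜] F} {y : E}
    (hf : ∀ α : Fin m → Bool, HasFDerivAt f (f' (y + ∑ i, if α i then u i else 0))
      (y + ∑ i, if α i then u i else 0)) :
    HasFDerivAt (𝕜 := 𝕜) (fdiff u f) (fdiff u f' y) y := by
  unfold fdiff
  refine HasFDerivAt.fun_sum fun α _ => ?_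
  have := ((hf α).comp y ((hasFDerivAt_id y).add_const _)).const_smul
    ((-1 : ℤ) ^ (m - #{i | α i}))
  simpa [Function.comp_def, Pi.smul_def] using this

lemma LipschitzOnWith.iteratedFDerivWithin_fderivWithin {n : ℕ} {f : E → F} {s : Set E}
    {L : ℝ≥0} (hs : UniqueDiffOn 𝕜 s)
    (hL : LipschitzOnWith L (iteratedFDerivWithin 𝕜 (n + 1) f s) s) :
    LipschitzOnWith L (iteratedFDerivWithin 𝕜 n (fderivWithin 𝕜 f s) s) s := by
  rw [lipschitzOnWith_iff_dist_le_mul] at hL ⊢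
  intro a ha b hb
  simpa [iteratedFDerivWithin_succ_eq_comp_right hs ha,
    iteratedFDerivWithin_succ_eq_comp_right hs hb] using hL a ha b hb

end Calculus

universe v

-- `E` and `F` share a universe because the induction replaces `F` by `E →L[ℝ] F`.
theorem norm_fdiff_le_of_lipschitzOnWith_iteratedFDerivWithin {E F : Type v}
    [NormedAddCommGroup E] [NormedSpace ℝ E] [NormedAddCommGroup F] [NormedSpace ℝ F]
    {s : Set E} (hs : IsOpen s) {m : ℕ} {f : E → F} (hf : ContDiffOn ℝ m f s) {L : ℝ≥0}
    (hL : LipschitzOnWith L (iteratedFDerivWithin ℝ m f s) s) {u : Fin (m + 1) → E} {x : E}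
    (hx : x +ᵥ parallelepiped u ⊆ s) :
    ‖fdiff u f x‖ ≤ L * ∏ i, ‖u i‖ := by
  induction m generalizing F x with
  | zero =>
    have hvert (α : Fin 1 → Bool) : x + ∑ i, (if α i then u i else 0) ∈ s :=
      hx (Set.vadd_mem_vadd_set (sum_ite_mem_parallelepiped u α))
    have := (lipschitzOnWith_iff_dist_le_mul.1 hL) _ (by simpa using hvert fun _ => true) _
      (by simpa using hvert fun _ => false)
    rw [dist_iteratedFDerivWithin_zero] at this
    simpa [fdiff_cons, dist_eq_norm] using this
  | succ n ih =>
    have hvert {y : E} (hy : y ∈ segment ℝ x (x + u 0)) (α : Fin (n + 1) → Bool) :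
        y + ∑ i, (if α i then Fin.tail u i else 0) ∈ s :=
      hx <| vadd_parallelepiped_tail_subset hy <|
        Set.vadd_mem_vadd_set (sum_ite_mem_parallelepiped _ α)
    have hderiv (y : E) (hy : y ∈ segment ℝ x (x + u 0)) :
        HasFDerivAt (fdiff (Fin.tail u) f) (fdiff (Fin.tail u) (fderivWithin ℝ f s) y) y :=
      hasFDerivAt_fdiff fun α =>
        ((hf.differentiableOn (by simp) _ (hvert hy α)).hasFDerivWithinAt).hasFDerivAt
          (hs.mem_nhds (hvert hy α))
    have hbound (y : E) (hy : y ∈ segment ℝ x (x + u 0)) :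
        ‖fdiff (Fin.tail u) (fderivWithin ℝ f s) y‖ ≤ L * ∏ i, ‖Fin.tail u i‖ :=
      ih (hf.fderivWithin hs.uniqueDiffOn (by norm_cast))
        (hL.iteratedFDerivWithin_fderivWithin hs.uniqueDiffOn)
        ((vadd_parallelepiped_tail_subset hy).trans hx)
    have hmvt := (convex_segment x (x + u 0)).norm_image_sub_le_of_norm_hasFDerivWithin_le
      (fun y hy => (hderiv y hy).hasFDerivWithinAt) hbound
      (left_mem_segment ℝ x (x + u 0)) (right_mem_segment ℝ x (x + u 0))
    rw [fdiff_cons, Fin.prod_univ_succ]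
    calc _ ≤ L * (∏ i, ‖Fin.tail u i‖) * ‖x + u 0 - x‖ := hmvt
      _ = _ := by rw [add_sub_cancel_left]; simp only [Fin.tail]; ring

theorem fdiff_bound_of_lipschitz_deriv_general {d : ℕ} (Ω : Set (EuclideanSpace ℝ (Fin d)))
    (hΩ : IsOpen Ω) {k : ℕ}
    (f : EuclideanSpace ℝ (Fin d) → ℝ) (hf : ContDiffOn ℝ k f Ω) (L : NNReal)
    (hL : LipschitzOnWith L (iteratedFDerivWithin ℝ k f Ω) Ω)
    (u : Fin (k + 1) → EuclideanSpace ℝ (Fin d)) (x : EuclideanSpace ℝ (Fin d))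
    (hpar : ∀ t ∈ Set.Icc (0 : Fin (k + 1) → ℝ) 1, x + ∑ i, t i • u i ∈ Ω) :
    ‖fdiff u f x‖ ≤ L * ∏ i, ‖u i‖ := by
  have hx : x +ᵥ parallelepiped u ⊆ Ω := by
    rintro _ ⟨p, hp, rfl⟩
    obtain ⟨t, ht, rfl⟩ := (mem_parallelepiped_iff u p).1 hp
    exact hpar t ht
  exact norm_fdiff_le_of_lipschitzOnWith_iteratedFDerivWithin hΩ hf hL hx

theorem fdiff_bound_of_lipschitz_deriv {d : ℕ} (Ω : Set (EuclideanSpace ℝ (Fin d)))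
    (hΩ : IsOpen Ω) (hconv : Convex ℝ Ω) {k : ℕ}
    (f : EuclideanSpace ℝ (Fin d) → ℝ) (hf : ContDiffOn ℝ k f Ω) (L : NNReal)
    (hL : LipschitzOnWith L (iteratedFDerivWithin ℝ k f Ω) Ω)
    (u : Fin (k + 1) → EuclideanSpace ℝ (Fin d)) (x : EuclideanSpace ℝ (Fin d))
    (hpar : ∀ t ∈ Set.Icc (0 : Fin (k + 1) → ℝ) 1, x + ∑ i, t i • u i ∈ Ω) :
    ‖fdiff u f x‖ ≤ L * ∏ i, ‖u i‖ :=
  fdiff_bound_of_lipschitz_deriv_general Ω hΩ f hf L hL u x hpar
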